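/- Replace attack against the DPDP scheme of Gritti et al. (Eq. (3)): suppose the server stores only the single block m₁ = (m_{1,1}, …, m_{1,s}) and its tag T_{m₁} ∈ G₁ satisfying T_{m₁}^a = ∏_{j=1}^s h_j^{m_{1,j}}. For any finite challenge set I with coefficients v_i ∈ ℤ (i ∈ I) and any r_j ∈ ℤ (j = 1, …, s), if the server answers with c = ∏_{i∈I} T_{m₁}^{v_i}, R_j = h_j^{r_j} and B_j = h_j^{(∑_{i∈I} m_{1,j}·v_i) + r_j}, then the verification equation e(c, g₂^a) · e(∏_{j=1}^s R_j, g₂) = e(∏_{j=1}^s B_j, g₂) holds; thus the proof passes verification although the server possesses only one block instead of the |I| challenged blocks. -/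

import Mathlib

/-!
Write `V = ∑_{i ∈ I} v_i`. The forged aggregate `c` equals `T_{m₁}^V`, so the tag relation gives
`c^a = ∏_j h_j^{m_{1,j} V}`, and the exponent `m_{1,j} V = ∑_{i ∈ I} m_{1,j} v_i` is exactly the
one the server put into `B_j`; hence `c^a · ∏_j R_j = ∏_j B_j` in `G₁`. Bilinearity moves the
exponent `a` from `g₂^a` to `c`, so the verification equation is the image of this identity
under `e(·, g₂)`.
-/

open Finset

lemma Finset.prod_zpow_eq_zpow_sum {G ι : Type*} [CommGroup G] (s : Finset ι) (f : ι → ℤ)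
    (x : G) : ∏ i ∈ s, x ^ f i = x ^ ∑ i ∈ s, f i := by
  induction s using Finset.cons_induction with
  | empty => simp
  | cons i s hi ih => rw [prod_cons, sum_cons, zpow_add, ih]

lemma map_zpow_of_map_mul {G H : Type*} [Group G] [Group H] (f : G → H)
    (hf : ∀ x y, f (x * y) = f x * f y) (x : G) (n : ℤ) : f (x ^ n) = f x ^ n :=
  (MonoidHom.mk' f hf).map_zpow x n

lemma zpow_eq_prod_of_zpow_eq_prod {G κ : Type*} [CommGroup G] [Fintype κ] {T : G} {a : ℤ}
    {h : κ → G} {m : κ → ℤ} (hT : T ^ a = ∏ j, h j ^ m j) (k : ℤ) :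
    (T ^ k) ^ a = ∏ j, h j ^ (m j * k) := by
  simp_rw [← zpow_mul, mul_comm k a, zpow_mul, hT, ← prod_zpow]

lemma bilinear_eq_of_mul_eq {G₁ G₂ GT : Type*} [CommGroup G₁] [Group G₂] [Group GT]
    (e : G₁ → G₂ → GT) (he₁ : ∀ x y z, e (x * y) z = e x z * e y z)
    (he₂ : ∀ x z w, e x (z * w) = e x z * e x w) {c R B : G₁} {a : ℤ} (g : G₂)
    (hB : c ^ a * R = B) : e c (g ^ a) * e R g = e B g := by
  rw [map_zpow_of_map_mul (e c) (he₂ c), ← map_zpow_of_map_mul (e · g) (he₁ · · g), ← he₁, hB]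

/-- Replace attack against the DPDP scheme of Gritti et al. (Eq. (3)):
a proof computed from the single stored block `m₁` passes verification. -/
theorem dpdp_replace_attack
    {G₁ G₂ GT : Type*} [CommGroup G₁] [CommGroup G₂] [CommGroup GT]
    (e : G₁ → G₂ → GT)
    (he₁ : ∀ x y z, e (x * y) z = e x z * e y z)
    (he₂ : ∀ x z w, e x (z * w) = e x z * e x w)
    (g₂ : G₂) (a : ℤ) (s : ℕ) (h : Fin s → G₁)
    (m₁ : Fin s → ℤ) (T₁ : G₁)
    (hT₁ : T₁ ^ a = ∏ j, (h j) ^ (m₁ j))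
    {ι : Type*} (I : Finset ι) (v : ι → ℤ) (r : Fin s → ℤ)
    (c : G₁) (hc : c = ∏ i ∈ I, T₁ ^ (v i))
    (R : Fin s → G₁) (hR : ∀ j, R j = (h j) ^ (r j))
    (B : Fin s → G₁)
    (hB : ∀ j, B j = (h j) ^ ((∑ i ∈ I, m₁ j * v i) + r j)) :
    e c (g₂ ^ a) * e (∏ j, R j) g₂ = e (∏ j, B j) g₂ := by
  apply bilinear_eq_of_mul_eq e he₁ he₂
  rw [hc, prod_zpow_eq_zpow_sum, zpow_eq_prod_of_zpow_eq_prod hT₁, ← prod_mul_distrib]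
  refine prod_congr rfl fun j _ => ?_
  rw [hR, hB, ← zpow_add, mul_sum]
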